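/- arXiv:2109.13863 — 3 statements merged into one kernel-verified Lean document; each statement's English description precedes it below -/
import Mathlib

section
/- (Planning optimality) In a finite deterministic MDP with a single goal state s_g and a set Π of deterministic policies satisfying the coverage assumption (some sequence of policies in Π reaches s_g from start state s_0), the FR-planning dynamic-programming iteration Γ_{k+1}(s) = max_{π∈Π, s'∈S} F^π(s,s')Γ_k(s'), initialized with Γ_1(s) = max_{π∈Π} F^π(s,s_g), converges to Γ(s_0) = γ^{L*} where L* is the length of the shortest path from s_0 to s_g achievable by switching among policies in Π. -/
open scoped Classical

/-!
Let `V s = γ ^ d s`, where `d s` is the length of a shortest path from `s` to the goal that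
switches among the policies of `Π` (and `V s = 0` if there is none). Each `F^π(s, s')` is `γ` to
the length of one such path from `s` to `s'`, so `F^π(s, s') V(s') ≤ V(s)` and, by induction,
`Γ_k ≤ V`. Conversely, along a shortest path every step `s ↦ ρ(s, π s)` contributes a factor
`F^π(s, ρ(s, π s)) ≥ γ`, and `Γ_k(s_g) ≥ F^π(s_g, s_g) = 1`; hence `Γ_k(s) ≥ γ ^ d s` once
`k > d s`.
-/

open Finset

section Paths

variable {S : Type*} {r r' : S → S → Prop} {s t u : S} {m n : ℕ}

def IsPath (r : S → S → Prop) (s t : S) (n : ℕ) : Prop :=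
  ∃ seq : ℕ → S, seq 0 = s ∧ seq n = t ∧ ∀ i < n, r (seq i) (seq (i + 1))

theorem isPath_zero : IsPath r s t 0 ↔ s = t := by
  constructor
  · rintro ⟨seq, rfl, rfl, -⟩
    rfl
  · rintro rfl
    exact ⟨fun _ => s, rfl, rfl, fun i hi => absurd hi i.not_lt_zero⟩

theorem isPath_succ : IsPath r s t (n + 1) ↔ ∃ u, r s u ∧ IsPath r u t n := by
  constructor
  · rintro ⟨seq, rfl, rfl, hseq⟩
    exact ⟨seq 1, hseq 0 n.succ_pos, fun i => seq (i + 1), rfl, rfl,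
      fun i hi => hseq (i + 1) (by omega)⟩
  · rintro ⟨u, hsu, seq, rfl, rfl, hseq⟩
    refine ⟨fun i => if i = 0 then s else seq (i - 1), rfl, by simp, ?_⟩
    rintro (_ | i) hi
    · simpa using hsu
    · simpa using hseq i (by omega)

theorem IsPath.single (h : r s t) : IsPath r s t 1 :=
  isPath_succ.2 ⟨t, h, isPath_zero.2 rfl⟩

theorem IsPath.append (h₁ : IsPath r s u m) (h₂ : IsPath r u t n) :
    IsPath r s t (m + n) := by
  induction m generalizing s with
  | zero =>
    obtain rfl := isPath_zero.1 h₁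
    simpa using h₂
  | succ m ih =>
    obtain ⟨v, hsv, hv⟩ := isPath_succ.1 h₁
    rw [Nat.succ_add]
    exact isPath_succ.2 ⟨v, hsv, ih hv⟩

theorem IsPath.mono (hr : ∀ x y, r x y → r' x y) (h : IsPath r s t n) : IsPath r' s t n :=
  let ⟨seq, h₀, hn, hseq⟩ := h
  ⟨seq, h₀, hn, fun i hi => hr _ _ (hseq i hi)⟩

theorem isPath_graph_iff {f : S → S} : IsPath (fun x y => f x = y) s t n ↔ f^[n] s = t := by
  induction n generalizing s with
  | zero => exact isPath_zero
  | succ n ih => simp [isPath_succ, ih, Function.iterate_succ_apply]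

end Paths

section PathDiscount

variable {S : Type*} {r r' : S → S → Prop} {s t u : S} {n : ℕ} {γ : ℝ}

noncomputable def pathDiscount (r : S → S → Prop) (γ : ℝ) (s t : S) : ℝ :=
  if h : ∃ n, IsPath r s t n then γ ^ Nat.find h else 0

theorem pathDiscount_eq_dite_of_iff {P : ℕ → Prop} (hP : ∀ n, IsPath r s t n ↔ P n) :
    pathDiscount r γ s t = if h : ∃ n, P n then γ ^ Nat.find h else 0 := by
  obtain rfl : (fun n => IsPath r s t n) = P := funext fun n => propext (hP n)
  rfl

theorem pathDiscount_nonneg (hγ : 0 ≤ γ) : 0 ≤ pathDiscount r γ s t := by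
  unfold pathDiscount
  split_ifs
  exacts [pow_nonneg hγ _, le_rfl]

theorem pathDiscount_self : pathDiscount r γ t t = 1 := by
  have h : ∃ n, IsPath r t t n := ⟨0, isPath_zero.2 rfl⟩
  rw [pathDiscount, dif_pos h, (Nat.find_eq_zero h).2 (isPath_zero.2 rfl), pow_zero]

theorem pow_le_pathDiscount (hγ₀ : 0 ≤ γ) (hγ₁ : γ ≤ 1) (h : IsPath r s t n) :
    γ ^ n ≤ pathDiscount r γ s t := by
  have hex : ∃ n, IsPath r s t n := ⟨n, h⟩
  rw [pathDiscount, dif_pos hex]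
  exact pow_le_pow_of_le_one hγ₀ hγ₁ (Nat.find_min' hex h)

theorem pathDiscount_mono (hγ₀ : 0 ≤ γ) (hγ₁ : γ ≤ 1) (hr : ∀ x y, r x y → r' x y) :
    pathDiscount r γ s t ≤ pathDiscount r' γ s t := by
  rw [pathDiscount]
  split_ifs with h
  · exact pow_le_pathDiscount hγ₀ hγ₁ ((Nat.find_spec h).mono hr)
  · exact pathDiscount_nonneg hγ₀

theorem pathDiscount_mul_le (hγ₀ : 0 ≤ γ) (hγ₁ : γ ≤ 1) :
    pathDiscount r γ s u * pathDiscount r γ u t ≤ pathDiscount r γ s t := by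
  rw [pathDiscount, pathDiscount]
  split_ifs with hsu hut
  · rw [← pow_add]
    exact pow_le_pathDiscount hγ₀ hγ₁ ((Nat.find_spec hsu).append (Nat.find_spec hut))
  all_goals simpa using pathDiscount_nonneg hγ₀

end PathDiscount

section Iteration

variable {ι S : Type*} [Fintype S] {P : Finset ι} {F : ι → S → S → ℝ} {g : S} {Γ : ℕ → S → ℝ}

noncomputable def frBackup (P : Finset ι) (hne : (P ×ˢ (univ : Finset S)).Nonempty)
    (F : ι → S → S → ℝ) (V : S → ℝ) (s : S) : ℝ :=
  (P ×ˢ univ).sup' hne fun p => F p.1 s p.2 * V p.2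

theorem le_frBackup {hne : (P ×ˢ (univ : Finset S)).Nonempty} {V : S → ℝ} {i : ι} (hi : i ∈ P)
    (s t : S) : F i s t * V t ≤ frBackup P hne F V s :=
  le_sup' (fun p : ι × S => F p.1 s p.2 * V p.2) (b := (i, t)) (mem_product.2 ⟨hi, mem_univ t⟩)

variable (hP : P.Nonempty) (hne : (P ×ˢ (univ : Finset S)).Nonempty)
  (hΓ₁ : ∀ s, Γ 1 s = P.sup' hP fun i => F i s g)
  (hΓ : ∀ k, 1 ≤ k → ∀ s, Γ (k + 1) s = frBackup P hne F (Γ k) s)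
include hΓ₁ hΓ

theorem frIterate_le {V : S → ℝ} (hF : ∀ i s t, 0 ≤ F i s t)
    (hV : ∀ i ∈ P, ∀ s t, F i s t * V t ≤ V s) (hVg : V g = 1) :
    ∀ k, 1 ≤ k → ∀ s, Γ k s ≤ V s := by
  intro k hk
  induction k, hk using Nat.le_induction with
  | base =>
    intro s
    rw [hΓ₁]
    exact sup'_le _ _ fun i hi => by simpa [hVg] using hV i hi s g
  | succ k hk ih =>
    intro s
    rw [hΓ k hk]
    exact sup'_le _ _ fun p hp =>
      (mul_le_mul_of_nonneg_left (ih p.2) (hF _ _ _)).trans (hV p.1 (mem_product.1 hp).1 s p.2)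

theorem one_le_frIterate_goal (hg : ∃ i ∈ P, 1 ≤ F i g g) : ∀ k, 1 ≤ k → 1 ≤ Γ k g := by
  obtain ⟨i, hi, hig⟩ := hg
  intro k hk
  induction k, hk using Nat.le_induction with
  | base => exact hΓ₁ g ▸ hig.trans (le_sup' (fun i => F i g g) hi)
  | succ k hk ih =>
    exact hΓ k hk g ▸ (one_le_mul_of_one_le_of_one_le hig ih).trans (le_frBackup hi g g)

theorem pow_le_frIterate_of_isPath {r : S → S → Prop} {c : ℝ} (hc : 0 ≤ c)
    (hF : ∀ i s t, 0 ≤ F i s t) (hr : ∀ s t, r s t → ∃ i ∈ P, c ≤ F i s t)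
    (hg : ∃ i ∈ P, 1 ≤ F i g g) {m : ℕ} {s : S} (hs : IsPath r s g m) :
    ∀ k, m + 1 ≤ k → c ^ m ≤ Γ k s := by
  induction m generalizing s with
  | zero =>
    obtain rfl := isPath_zero.1 hs
    simpa using one_le_frIterate_goal hP hne hΓ₁ hΓ hg
  | succ m ih =>
    intro k hk
    obtain ⟨t, hst, ht⟩ := isPath_succ.1 hs
    obtain ⟨i, hi, hci⟩ := hr s t hst
    obtain ⟨k, rfl⟩ : ∃ j, k = j + 1 := ⟨k - 1, by omega⟩
    calc c ^ (m + 1) = c * c ^ m := pow_succ' c m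
      _ ≤ F i s t * Γ k t := mul_le_mul hci (ih ht k (by omega)) (pow_nonneg hc m) (hF i s t)
      _ ≤ Γ (k + 1) s := hΓ k (by omega) s ▸ le_frBackup hi s t

end Iteration

def PolicyStep {S A : Type*} (ρ : S → A → S) (Pol : Finset (S → A)) (s t : S) : Prop :=
  ∃ π ∈ Pol, ρ s (π s) = t

theorem frp_optimality_deterministic_general {S A : Type*} [Fintype S]
    (γ : ℝ) (hγ0 : 0 < γ) (hγ1 : γ < 1)
    (ρ : S → A → S) (Pol : Finset (S → A)) (hPol : Pol.Nonempty)
    (s₀ sg : S)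
    (Fv : (S → A) → S → S → ℝ)
    (hFv : ∀ π s s', Fv π s s' =
      if h : ∃ k : ℕ, (fun x => ρ x (π x))^[k] s = s' then γ ^ Nat.find h else 0)
    (Reach : ℕ → Prop)
    (hReach : ∀ L, Reach L ↔ ∃ seq : ℕ → S, seq 0 = s₀ ∧ seq L = sg ∧
      ∀ i < L, ∃ π ∈ Pol, ρ (seq i) (π (seq i)) = seq (i + 1))
    (hcov : ∃ L, Reach L)
    (Γ : ℕ → S → ℝ)
    (hΓ1 : ∀ s, Γ 1 s = Pol.sup' hPol fun π => Fv π s sg)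
    (hΓ : ∀ k, 1 ≤ k → ∀ s, Γ (k + 1) s =
      (Pol ×ˢ (Finset.univ : Finset S)).sup'
        (hPol.product ⟨s₀, Finset.mem_univ s₀⟩)
        fun p => Fv p.1 s p.2 * Γ k p.2) :
    ∃ K : ℕ, ∀ k, K ≤ k → Γ k s₀ = γ ^ Nat.find hcov := by
  have hFv_eq : ∀ π s t, Fv π s t = pathDiscount (fun x y => ρ x (π x) = y) γ s t :=
    fun π s t => (hFv π s t).trans (pathDiscount_eq_dite_of_iff fun _ => isPath_graph_iff).symm
  have hF_nonneg : ∀ π s t, 0 ≤ Fv π s t := fun π s t => hFv_eq π s t ▸ pathDiscount_nonneg hγ0.le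
  have hF_super : ∀ π ∈ Pol, ∀ s t,
      Fv π s t * pathDiscount (PolicyStep ρ Pol) γ t sg ≤ pathDiscount (PolicyStep ρ Pol) γ s sg :=
    fun π hπ s t => calc
      Fv π s t * pathDiscount (PolicyStep ρ Pol) γ t sg
          ≤ pathDiscount (PolicyStep ρ Pol) γ s t * pathDiscount (PolicyStep ρ Pol) γ t sg :=
        mul_le_mul_of_nonneg_right (hFv_eq π s t ▸ pathDiscount_mono hγ0.le hγ1.le
          fun _ _ h => ⟨π, hπ, h⟩) (pathDiscount_nonneg hγ0.le)
      _ ≤ pathDiscount (PolicyStep ρ Pol) γ s sg := pathDiscount_mul_le hγ0.le hγ1.le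
  have hF_one_step : ∀ s t, PolicyStep ρ Pol s t → ∃ π ∈ Pol, γ ≤ Fv π s t :=
    fun s t ⟨π, hπ, h⟩ => ⟨π, hπ, calc
      γ = γ ^ 1 := (pow_one γ).symm
      _ ≤ pathDiscount (fun x y => ρ x (π x) = y) γ s t :=
        pow_le_pathDiscount hγ0.le hγ1.le (.single h)
      _ = Fv π s t := (hFv_eq π s t).symm⟩
  have hF_goal : ∃ π ∈ Pol, 1 ≤ Fv π sg sg :=
    let ⟨π, hπ⟩ := hPol
    ⟨π, hπ, ((hFv_eq π sg sg).trans pathDiscount_self).ge⟩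
  have hReach' : ∀ L, IsPath (PolicyStep ρ Pol) s₀ sg L ↔ Reach L := fun L => (hReach L).symm
  have hpath : IsPath (PolicyStep ρ Pol) s₀ sg (Nat.find hcov) := (hReach' _).2 (Nat.find_spec hcov)
  have hvalue : pathDiscount (PolicyStep ρ Pol) γ s₀ sg = γ ^ Nat.find hcov := by
    rw [pathDiscount_eq_dite_of_iff hReach', dif_pos hcov]
  refine ⟨Nat.find hcov + 1, fun k hk => le_antisymm ?_ ?_⟩
  · exact hvalue ▸ frIterate_le hPol _ hΓ1 hΓ hF_nonneg hF_super pathDiscount_self k (by omega) s₀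
  · exact pow_le_frIterate_of_isPath hPol _ hΓ1 hΓ hγ0.le hF_nonneg hF_one_step hF_goal hpath k hk

/-- Planning optimality: In a finite deterministic MDP with a
single goal state and deterministic base policies satisfying the coverage
assumption, FR-planning converges to Γ(s₀) = γ^{L*}, where L* is the shortest
path length from s₀ to the goal achievable by switching among policies in Π. -/
theorem frp_optimality_deterministic {S A : Type*} [Fintype S] [Fintype A]
    (γ : ℝ) (hγ0 : 0 < γ) (hγ1 : γ < 1)
    (ρ : S → A → S) (Pol : Finset (S → A)) (hPol : Pol.Nonempty)
    (s₀ sg : S)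
    (Fv : (S → A) → S → S → ℝ)
    (hFv : ∀ π s s', Fv π s s' =
      if h : ∃ k : ℕ, (fun x => ρ x (π x))^[k] s = s' then γ ^ Nat.find h else 0)
    (Reach : ℕ → Prop)
    (hReach : ∀ L, Reach L ↔ ∃ seq : ℕ → S, seq 0 = s₀ ∧ seq L = sg ∧
      ∀ i < L, ∃ π ∈ Pol, ρ (seq i) (π (seq i)) = seq (i + 1))
    (hcov : ∃ L, Reach L)
    (Γ : ℕ → S → ℝ)
    (hΓ1 : ∀ s, Γ 1 s = Pol.sup' hPol fun π => Fv π s sg)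
    (hΓ : ∀ k, 1 ≤ k → ∀ s, Γ (k + 1) s =
      (Pol ×ˢ (Finset.univ : Finset S)).sup'
        (hPol.product ⟨s₀, Finset.mem_univ s₀⟩)
        fun p => Fv p.1 s p.2 * Γ k p.2) :
    ∃ K : ℕ, ∀ k, K ≤ k → Γ k s₀ = γ ^ Nat.find hcov :=
  frp_optimality_deterministic_general γ hγ0 hγ1 ρ Pol hPol s₀ sg Fv hFv Reach hReach hcov Γ hΓ1 hΓ
end

section
/- The row sums of the FR are bounded: for every state s, ∑_{s'} F^π(s,s') ≤ (1 - γ^{|S|+1})/(1 - γ), i.e., ‖F^π(s)‖_1 ≤ ∑_{k=0}^{|S|} γ^k. -/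
open Finset

/-! For a set `W` of states containing `u`, write `G_W(u) = ∑_{s' ∉ W} F(u, s')`. The fixed-point
equation gives `G_W(u) = γ · 𝔼_{t ~ P(u, ·)} G_W(t)`, and for `t ∉ W` peeling off the diagonal term
`F(t, t) = 1` gives `G_W(t) = 1 + G_{W ∪ {t}}(t)`. A discounted maximum principle over `W` then
bounds `G_W` by `γ (1 + γ + ⋯ + γ^{|Wᶜ| - 1})`, by induction on `|Wᶜ|`. -/

theorem le_mul_of_le_discounted_mean {S : Type*} [Fintype S] {γ b : ℝ}
    (hγ0 : 0 ≤ γ) (hγ1 : γ < 1) (hb : 0 ≤ b)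
    {P : Matrix S S ℝ} (hP0 : ∀ s s', 0 ≤ P s s') (hP1 : ∀ s, ∑ s', P s s' = 1)
    {W : Finset S} {x : S → ℝ} (hxW : ∀ u ∈ W, x u ≤ γ * ∑ t, P u t * x t)
    (hxb : ∀ t ∉ W, x t ≤ b) :
    ∀ u ∈ W, x u ≤ γ * b := by
  intro u hu
  obtain ⟨u₀, hu₀, hmax⟩ := W.exists_max_image x ⟨u, hu⟩
  have hx_le : ∀ t, x t ≤ max (x u₀) b := fun t => by
    by_cases ht : t ∈ W
    · exact le_max_of_le_left (hmax t ht)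
    · exact le_max_of_le_right (hxb t ht)
  have hx₀ : x u₀ ≤ γ * max (x u₀) b :=
    calc x u₀ ≤ γ * ∑ t, P u₀ t * x t := hxW u₀ hu₀
      _ ≤ γ * ∑ t, P u₀ t * max (x u₀) b := by
        gcongr with t
        exacts [hP0 u₀ t, hx_le t]
      _ = γ * max (x u₀) b := by rw [← sum_mul, hP1, one_mul]
  have hmax_le : x u₀ ≤ γ * b := by
    rcases le_total (x u₀) b with h | h
    · rwa [max_eq_right h] at hx₀
    · rw [max_eq_left h] at hx₀
      have hnonpos : x u₀ ≤ 0 := by nlinarith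
      linarith [mul_nonneg hγ0 hb]
  exact (hmax u hu).trans hmax_le

section FirstOccupancy

variable {S : Type*} [Fintype S] [DecidableEq S] {γ : ℝ} {P Fπ : Matrix S S ℝ}
  (hfix : ∀ s s', Fπ s s' =
    (if s = s' then (1 : ℝ) else 0) +
      γ * (if s = s' then 0 else 1) * ∑ s'', P s s'' * Fπ s'' s')
include hfix

theorem fr_diag (s : S) : Fπ s s = 1 := by
  simp [hfix s s]

theorem fr_sum_compl_eq {W : Finset S} {u : S} (hu : u ∈ W) :
    ∑ s' ∈ Wᶜ, Fπ u s' = γ * ∑ t, P u t * ∑ s' ∈ Wᶜ, Fπ t s' := by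
  have hoff : ∀ s' ∈ Wᶜ, Fπ u s' = γ * ∑ t, P u t * Fπ t s' := fun s' hs' => by
    have hne : u ≠ s' := fun h => mem_compl.mp hs' (h ▸ hu)
    simp [hfix u s', hne]
  rw [sum_congr rfl hoff, ← mul_sum, sum_comm]
  simp only [mul_sum]

theorem fr_sum_compl_eq_one_add {W : Finset S} {t : S} (ht : t ∉ W) :
    ∑ s' ∈ Wᶜ, Fπ t s' = 1 + ∑ s' ∈ (insert t W)ᶜ, Fπ t s' := by
  rw [compl_insert, ← fr_diag hfix t, add_sum_erase _ _ (mem_compl.mpr ht)]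

theorem fr_sum_compl_le (hγ0 : 0 ≤ γ) (hγ1 : γ < 1)
    (hP0 : ∀ s s', 0 ≤ P s s') (hP1 : ∀ s, ∑ s', P s s' = 1)
    (W : Finset S) {u : S} (hu : u ∈ W) :
    ∑ s' ∈ Wᶜ, Fπ u s' ≤ γ * ∑ k ∈ range #Wᶜ, γ ^ k := by
  induction hm : #Wᶜ generalizing W u with
  | zero => simp [card_eq_zero.mp hm]
  | succ m ih =>
    refine le_mul_of_le_discounted_mean hγ0 hγ1 (sum_nonneg fun k _ => pow_nonneg hγ0 k) hP0 hP1
      (fun u hu => (fr_sum_compl_eq hfix hu).le) (fun t ht => ?_) u hu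
    have hcard : #(insert t W)ᶜ = m := by
      rw [compl_insert, card_erase_of_mem (mem_compl.mpr ht), hm, Nat.add_sub_cancel]
    rw [fr_sum_compl_eq_one_add hfix ht, geom_sum_succ, add_comm 1]
    simpa only [add_le_add_iff_right, hcard] using ih (insert t W) (mem_insert_self t W) hcard

end FirstOccupancy

/-- Row sums of the FR are bounded:
‖F^π(s)‖₁ ≤ (1 - γ^{|S|+1})/(1 - γ) = ∑_{k=0}^{|S|} γ^k for every state s. -/
theorem fr_row_sum_bound {S : Type*} [Fintype S] [DecidableEq S]
    (γ : ℝ) (hγ0 : 0 ≤ γ) (hγ1 : γ < 1)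
    (P : Matrix S S ℝ) (hP0 : ∀ s s', 0 ≤ P s s') (hP1 : ∀ s, ∑ s', P s s' = 1)
    (Fπ : Matrix S S ℝ)
    (hfix : ∀ s s', Fπ s s' =
      (if s = s' then (1 : ℝ) else 0) +
        γ * (if s = s' then 0 else 1) * ∑ s'', P s s'' * Fπ s'' s') :
    ∀ s, ∑ s', Fπ s s' ≤ ∑ k ∈ Finset.range (Fintype.card S + 1), γ ^ k := by
  intro s
  have hrow : ∑ s', Fπ s s' = 1 + ∑ s' ∈ {s}ᶜ, Fπ s s' := by
    simpa using fr_sum_compl_eq_one_add hfix (notMem_empty s)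
  calc ∑ s', Fπ s s' ≤ 1 + γ * ∑ k ∈ range #{s}ᶜ, γ ^ k := by
        rw [hrow]
        gcongr
        exact fr_sum_compl_le hfix hγ0 hγ1 hP0 hP1 {s} (mem_singleton_self s)
    _ = ∑ k ∈ range (#{s}ᶜ + 1), γ ^ k := by rw [geom_sum_succ, add_comm]
    _ ≤ ∑ k ∈ range (Fintype.card S + 1), γ ^ k :=
        sum_le_sum_of_subset_of_nonneg (range_subset_range.mpr (by simpa using card_le_univ _))
          fun k _ _ => pow_nonneg hγ0 k
end

section
/- (GPI-style guarantee via FR planning) In the deterministic single-goal setting satisfying the coverage assumption, the converged FRP discount satisfies Γ(s) ≥ max_{π∈Π} F^π(s, s_g) for every state s; i.e., the plan constructed by switching among policies in Π reaches the goal at least as fast as any single policy in Π. -/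
/-! Planning may always "stay put": the first-hit discount from a state to itself is `γ ^ 0 = 1`,
so the pair `(π, s)` contributes `Γ k s` to the maximum defining `Γ (k + 1) s`. Hence `Γ k s` is
nondecreasing in `k`, and its limit dominates `Γ 1 s`, which is the best single-policy discount
to the goal. -/

open scoped Classical
open Filter

theorem dite_iterate_find_self_eq_one {S M : Type*} [MonoidWithZero M] (f : S → S) (γ : M)
    (s : S) :
    (if h : ∃ k : ℕ, f^[k] s = s then γ ^ Nat.find h else 0) = 1 := by
  have h : ∃ k : ℕ, f^[k] s = s := ⟨0, rfl⟩
  rw [dif_pos h, Nat.find_eq_zero h |>.mpr rfl, pow_zero]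

theorem Finset.le_sup'_product_mul_of_eq_one {ι σ R : Type*} [SemilatticeSup R] [MulOneClass R]
    {P : Finset ι} {T : Finset σ} (hPT : (P ×ˢ T).Nonempty) (F : ι → σ → R) (v : σ → R)
    {i : ι} {t : σ} (hi : i ∈ P) (ht : t ∈ T) (hF : F i t = 1) :
    v t ≤ (P ×ˢ T).sup' hPT fun p => F p.1 p.2 * v p.2 :=
  Finset.le_sup'_of_le _ (b := (i, t)) (Finset.mem_product.mpr ⟨hi, ht⟩) (by rw [hF, one_mul])

theorem frp_ge_gpi_general {S A : Type*} [Fintype S] [Nonempty S]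
    (γ : ℝ)
    (ρ : S → A → S) (Pol : Finset (S → A)) (hPol : Pol.Nonempty)
    (sg : S)
    (Fv : (S → A) → S → S → ℝ)
    (hFv : ∀ π s s', Fv π s s' =
      if h : ∃ k : ℕ, (fun x => ρ x (π x))^[k] s = s' then γ ^ Nat.find h else 0)
    (Γ : ℕ → S → ℝ)
    (hΓ1 : ∀ s, Γ 1 s = Pol.sup' hPol fun π => Fv π s sg)
    (hΓ : ∀ k, 1 ≤ k → ∀ s, Γ (k + 1) s =
      (Pol ×ˢ (Finset.univ : Finset S)).sup'
        (hPol.product Finset.univ_nonempty)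
        fun p => Fv p.1 s p.2 * Γ k p.2)
    (Γinf : S → ℝ)
    (hlim : ∀ s, Tendsto (fun k => Γ k s) atTop (nhds (Γinf s))) :
    ∀ s, (Pol.sup' hPol fun π => Fv π s sg) ≤ Γinf s := by
  intro s
  obtain ⟨π, hπ⟩ := hPol
  have hstay : Fv π s s = 1 := by rw [hFv, dite_iterate_find_self_eq_one]
  have hstep : ∀ k, 1 ≤ k → Γ k s ≤ Γ (k + 1) s := fun k hk => by
    rw [hΓ k hk s]
    exact Finset.le_sup'_product_mul_of_eq_one _ (Fv · s) (Γ k) hπ (Finset.mem_univ s) hstay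
  have hmono : ∀ k, 1 ≤ k → Γ 1 s ≤ Γ k s := fun k hk => by
    induction k, hk using Nat.le_induction with
    | base => rfl
    | succ k hk ih => exact ih.trans (hstep k hk)
  rw [← hΓ1 s]
  exact ge_of_tendsto (hlim s) (eventually_atTop.mpr ⟨1, hmono⟩)

/-- GPI-style guarantee via FR planning: In the deterministic
single-goal setting, the converged FRP discount satisfies
Γ(s) ≥ max_{π∈Π} F^π(s, s_g) for every state s. -/
theorem frp_ge_gpi {S A : Type*} [Fintype S] [Fintype A] [Nonempty S]
    (γ : ℝ) (hγ0 : 0 < γ) (hγ1 : γ < 1)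
    (ρ : S → A → S) (Pol : Finset (S → A)) (hPol : Pol.Nonempty)
    (sg : S)
    (Fv : (S → A) → S → S → ℝ)
    (hFv : ∀ π s s', Fv π s s' =
      if h : ∃ k : ℕ, (fun x => ρ x (π x))^[k] s = s' then γ ^ Nat.find h else 0)
    (Γ : ℕ → S → ℝ)
    (hΓ1 : ∀ s, Γ 1 s = Pol.sup' hPol fun π => Fv π s sg)
    (hΓ : ∀ k, 1 ≤ k → ∀ s, Γ (k + 1) s =
      (Pol ×ˢ (Finset.univ : Finset S)).sup'
        (hPol.product Finset.univ_nonempty)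
        fun p => Fv p.1 s p.2 * Γ k p.2)
    (Γinf : S → ℝ)
    (hlim : ∀ s, Tendsto (fun k => Γ k s) atTop (nhds (Γinf s))) :
    ∀ s, (Pol.sup' hPol fun π => Fv π s sg) ≤ Γinf s :=
  frp_ge_gpi_general γ ρ Pol hPol sg Fv hFv Γ hΓ1 hΓ Γinf hlim
end
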